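/- Under the setup where N_5 = ∅, N_4 independent, edges in N_3 do not contact N_4, and D ∩ N_2 = ∅: if v_1, v_2 ∈ N_3 satisfy N(v_1) ∩ N_4 = N(v_2) ∩ N_4 = {w} for a single vertex w, and there exists an efficient dominating set D of G containing D_basis, then w ∈ D. -/
import Mathlib


open SimpleGraph

variable {V : Type*}

/-- The closed neighborhood of a vertex. -/
def closedNbhd (G : SimpleGraph V) (v : V) : Set V := insert v (G.neighborSet v)

/-- `D` is an efficient dominating set: every vertex has exactly one `D`-vertex
in its closed neighborhood. -/
def IsEDS (G : SimpleGraph V) (D : Set V) : Prop :=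
  ∀ v : V, ∃! d, d ∈ D ∧ d ∈ closedNbhd G v

/-- The distance (in `ℕ∞`) from a vertex to a set of vertices. -/
noncomputable def distToSet (G : SimpleGraph V) (S : Set V) (v : V) : ℕ∞ :=
  sInf ((fun d => G.edist v d) '' S)

/-- The `i`-th distance level of a vertex set. -/
noncomputable def lvl (G : SimpleGraph V) (S : Set V) (i : ℕ) : Set V :=
  {v | distToSet G S v = (i : ℕ∞)}

/-- `p` is an induced (chordless) path on `k` vertices in `G`. -/
def IsInducedPath (G : SimpleGraph V) {k : ℕ} (p : Fin k → V) : Prop :=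
  Function.Injective p ∧
    ∀ i j : Fin k, G.Adj (p i) (p j) ↔ (i.val + 1 = j.val ∨ j.val + 1 = i.val)

/-- `G` contains no induced path on 8 vertices. -/
def P8Free (G : SimpleGraph V) : Prop := ∀ p : Fin 8 → V, ¬ IsInducedPath G p

/-- `(X, Y)` is a bipartition of `G`. -/
structure Bipartition (G : SimpleGraph V) (X Y : Set V) : Prop where
  union : X ∪ Y = Set.univ
  disj : Disjoint X Y
  adj : ∀ ⦃u v : V⦄, G.Adj u v → (u ∈ X ∧ v ∈ Y) ∨ (u ∈ Y ∧ v ∈ X)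

lemma distToSet_adj_le [Fintype V] (G : SimpleGraph V) (S : Set V) (hS : S.Nonempty)
    {u v : V} (h : G.Adj u v) : distToSet G S u ≤ distToSet G S v + 1 := by
  have hfin : ((fun d => G.edist v d) '' S).Finite := (S.toFinite).image _
  have hne : ((fun d => G.edist v d) '' S).Nonempty := hS.image _
  obtain ⟨x, hx, hxe⟩ := hne.csInf_mem hfin
  calc distToSet G S u ≤ G.edist u x := csInf_le (OrderBot.bddBelow _) ⟨x, hx, rfl⟩
    _ ≤ G.edist u v + G.edist v x := G.edist_triangle
    _ ≤ 1 + G.edist v x := by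
        gcongr; exact le_of_eq (edist_eq_one_iff_adj.mpr h)
    _ = distToSet G S v + 1 := by
        have hxe' : G.edist v x = distToSet G S v := hxe
        rw [add_comm, ← hxe']

/-- under the standing assumptions, if `v₁ ≠ v₂` in `N₃` satisfy
`N(v₁) ∩ N₄ = N(v₂) ∩ N₄ = {w}`, then `w ∈ D`. -/
theorem stmt_12 [Fintype V] (G : SimpleGraph V) (X Y : Set V)
    (hbip : Bipartition G X Y) (hP8 : P8Free G)
    (D Dbasis : Set V) (hD : IsEDS G D) (hsub : Dbasis ⊆ D)
    (hne : Dbasis.Nonempty)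
    (hN5 : lvl G Dbasis 5 = ∅)
    (hN4indep : ∀ a b : V, a ∈ lvl G Dbasis 4 → b ∈ lvl G Dbasis 4 → ¬ G.Adj a b)
    (hN3edge : ∀ a b c : V, a ∈ lvl G Dbasis 3 → b ∈ lvl G Dbasis 3 → G.Adj a b →
        c ∈ lvl G Dbasis 4 → ¬ G.Adj a c)
    (hDN12 : D ∩ (lvl G Dbasis 1 ∪ lvl G Dbasis 2) = ∅)
    {v₁ v₂ w : V} (hv₁ : v₁ ∈ lvl G Dbasis 3) (hv₂ : v₂ ∈ lvl G Dbasis 3)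
    (hne12 : v₁ ≠ v₂)
    (hw₁ : G.neighborSet v₁ ∩ lvl G Dbasis 4 = {w})
    (hw₂ : G.neighborSet v₂ ∩ lvl G Dbasis 4 = {w}) :
    w ∈ D := by
  have hwmem : w ∈ G.neighborSet v₁ ∩ lvl G Dbasis 4 := by rw [hw₁]; rfl
  have hwmem2 : w ∈ G.neighborSet v₂ ∩ lvl G Dbasis 4 := by rw [hw₂]; rfl
  have hadj1 : G.Adj v₁ w := hwmem.1
  have hadj2 : G.Adj v₂ w := hwmem2.1
  have hw4 : w ∈ lvl G Dbasis 4 := hwmem.2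
  have key : ∀ v : V, v ∈ lvl G Dbasis 3 → G.Adj v w →
      G.neighborSet v ∩ lvl G Dbasis 4 = {w} → v ∈ D ∨ w ∈ D := by
    intro v hv hvw hwv
    obtain ⟨d, ⟨hdD, hdC⟩, _⟩ := hD v
    rcases hdC with rfl | hdadj
    · exact Or.inl hdD
    · -- d is adjacent to v
      have hdadj : G.Adj v d := hdadj
      have hv3 : distToSet G Dbasis v = (3 : ℕ) := hv
      have hle : distToSet G Dbasis d ≤ (3 : ℕ∞) + 1 := by
        have := distToSet_adj_le G Dbasis hne hdadj.symm
        rwa [hv3] at this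
      have hge : (3 : ℕ∞) ≤ distToSet G Dbasis d + 1 := by
        have := distToSet_adj_le G Dbasis hne hdadj
        rwa [hv3] at this
      have hnetop : distToSet G Dbasis d ≠ ⊤ := by
        intro h; rw [h, top_le_iff] at hle
        exact (by decide : (3:ℕ∞) + 1 ≠ ⊤) hle
      lift distToSet G Dbasis d to ℕ using hnetop with m hm
      have hle' : m ≤ 4 := by exact_mod_cast hle
      have hge' : 3 ≤ m + 1 := by exact_mod_cast hge
      have hge2 : 2 ≤ m := by omega
      interval_cases m
      · -- level 2 : contradiction with hDN12
        exfalso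
        have hd2 : d ∈ lvl G Dbasis 2 := by
          show distToSet G Dbasis d = ((2:ℕ) : ℕ∞); exact hm.symm.trans (by norm_num)
        have : d ∈ D ∩ (lvl G Dbasis 1 ∪ lvl G Dbasis 2) := ⟨hdD, Or.inr hd2⟩
        rw [hDN12] at this; exact this
      · -- level 3 : contradiction with hN3edge
        exfalso
        have hd3 : d ∈ lvl G Dbasis 3 := by
          show distToSet G Dbasis d = ((3:ℕ) : ℕ∞); exact hm.symm.trans (by norm_num)
        exact hN3edge v d w hv hd3 hdadj hw4 hvw
      · -- level 4 : d = w
        have hd4 : d ∈ lvl G Dbasis 4 := by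
          show distToSet G Dbasis d = ((4:ℕ) : ℕ∞); exact hm.symm.trans (by norm_num)
        have : d ∈ G.neighborSet v ∩ lvl G Dbasis 4 := ⟨hdadj, hd4⟩
        rw [hwv] at this
        exact Or.inr (this ▸ hdD)
  rcases key v₁ hv₁ hadj1 hw₁ with h1 | h1
  · rcases key v₂ hv₂ hadj2 hw₂ with h2 | h2
    · exfalso
      obtain ⟨d, _, huniq⟩ := hD w
      have e1 : v₁ = d := huniq v₁ ⟨h1, Or.inr hadj1.symm⟩
      have e2 : v₂ = d := huniq v₂ ⟨h2, Or.inr hadj2.symm⟩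
      exact hne12 (e1.trans e2.symm)
    · exact h2
  · exact h1
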